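/- arXiv:2512.08835 — 2 statements merged into one kernel-verified Lean document; each statement's English description precedes it below -/
import Mathlib

section
/- Let X be a sober topological space. Then the Munn semigroup T_{Ω(X)} of the semilattice Ω(X) of open subsets of X (under intersection) is isomorphic to the inverse semigroup I(X,τ) of homeomorphisms between open subsets of X. -/
/-- A meet-semilattice: a commutative semigroup all of whose elements are idempotent. -/
class MeetSL (E : Type*) extends CommSemigroup E where
  idem : ∀ e : E, e * e = e

/-- The natural partial order on a meet-semilattice: `e ≤ f` iff `e = ef`. -/
def sle {E : Type*} [MeetSL E] (e f : E) : Prop := e = e * f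

/-- The principal order-ideal `e↓ = {h ∈ E : h ≤ e}` of a meet-semilattice. -/
abbrev dOn (E : Type*) [MeetSL E] (e : E) : Type _ := {h : E // sle h e}

/-- An element of the (classical) Munn semigroup `T_E` of a meet-semilattice `E`:
an order-isomorphism between principal order-ideals `e↓` and `f↓` of `E`. -/
structure MunnEltE (E : Type*) [MeetSL E] where
  e : E
  f : E
  θ : dOn E e ≃ dOn E f
  θ_ord : ∀ a b : dOn E e, sle a.1 b.1 ↔ sle (θ a).1 (θ b).1

/-- The partial-bijection graph of an element of the Munn semigroup `T_E`. -/
def MunnEltE.mapsE {E : Type*} [MeetSL E] (t : MunnEltE E) (a b : E) : Prop :=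
  ∃ h : sle a t.e, (t.θ ⟨a, h⟩).1 = b

/-- `mul` is the multiplication of the Munn semigroup `T_E`: composition of the
appropriate restrictions (apply `b` first, then `a`). -/
def IsMunnMulE {E : Type*} [MeetSL E] (mul : MunnEltE E → MunnEltE E → MunnEltE E) : Prop :=
  ∀ a b : MunnEltE E, ∀ h k : E,
    (mul a b).mapsE h k ↔ ∃ m, b.mapsE h m ∧ a.mapsE m k

/-- A partial homeomorphism of a topological space: a homeomorphism between open
subsets (an element of the inverse semigroup `I(X, τ)`). -/
structure PHomeo (X : Type*) [TopologicalSpace X] where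
  src : Set X
  tgt : Set X
  src_open : IsOpen src
  tgt_open : IsOpen tgt
  toHomeomorph : ↥src ≃ₜ ↥tgt

/-- The graph of a partial homeomorphism. -/
def PHomeo.maps {X : Type*} [TopologicalSpace X] (t : PHomeo X) (x y : X) : Prop :=
  ∃ h : x ∈ t.src, (t.toHomeomorph ⟨x, h⟩).1 = y

/-- `mul` is the multiplication of `I(X, τ)`: the product `mul a b` is the composition
"apply `b` first, then `a`", restricted to the largest open set on which it is defined. -/
def IsPHMul {X : Type*} [TopologicalSpace X] (mul : PHomeo X → PHomeo X → PHomeo X) : Prop :=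
  ∀ a b : PHomeo X, ∀ x z : X,
    (mul a b).maps x z ↔ ∃ y, b.maps x y ∧ a.maps y z

/-- `inv` is the inversion of `I(X, τ)`. -/
def IsPHInv {X : Type*} [TopologicalSpace X] (inv : PHomeo X → PHomeo X) : Prop :=
  ∀ t : PHomeo X, ∀ x y : X, (inv t).maps x y ↔ t.maps y x

/-- The meet-semilattice `Ω(B)` of open subsets of a topological space under intersection. -/
abbrev OpenSets (B : Type*) [TopologicalSpace B] : Type _ := {U : Set B // IsOpen U}

instance instMeetSLOpenSets (B : Type*) [TopologicalSpace B] : MeetSL (OpenSets B) where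
  mul a b := ⟨a.1 ∩ b.1, a.2.inter b.2⟩
  mul_assoc a b c := Subtype.ext (Set.inter_assoc a.1 b.1 c.1)
  mul_comm a b := Subtype.ext (Set.inter_comm a.1 b.1)
  idem a := Subtype.ext (Set.inter_self a.1)


section MunnIsoAux

set_option linter.unusedSectionVars false

open Set
variable {X : Type*} [TopologicalSpace X]

lemma mulOS_val (u v : OpenSets X) : (u * v).1 = u.1 ∩ v.1 := rfl

lemma sle_iff (u v : OpenSets X) : sle u v ↔ u.1 ⊆ v.1 := by
  unfold sle
  rw [Subtype.ext_iff, mulOS_val, eq_comm, Set.inter_eq_left]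

lemma sle_refl' (u : OpenSets X) : sle u u := (sle_iff u u).2 subset_rfl

lemma sle_antisymm' {u v : OpenSets X} (h : sle u v) (h' : sle v u) : u = v :=
  Subtype.ext (subset_antisymm ((sle_iff _ _).1 h) ((sle_iff _ _).1 h'))

def pO (e : OpenSets X) (x : X) : OpenSets X :=
  ⟨e.1 ∩ (closure {x})ᶜ, e.2.inter isClosed_closure.isOpen_compl⟩

lemma subset_compl_closure_iff {a : Set X} (ha : IsOpen a) (x : X) :
    a ⊆ (closure {x})ᶜ ↔ x ∉ a := by
  constructor
  · intro h hx
    exact h hx (subset_closure rfl)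
  · intro hx y hy hyc
    rcases mem_closure_iff.1 hyc a ha hy with ⟨z, hz1, hz2⟩
    exact hx (Set.mem_singleton_iff.1 hz2 ▸ hz1)

lemma sle_pO {e a : OpenSets X} {x : X} : sle a (pO e x) ↔ a.1 ⊆ e.1 ∧ x ∉ a.1 := by
  rw [sle_iff]
  show a.1 ⊆ e.1 ∩ (closure {x})ᶜ ↔ _
  rw [Set.subset_inter_iff, subset_compl_closure_iff a.2]

lemma sle_pO_e (e : OpenSets X) (x : X) : sle (pO e x) e := (sle_iff _ _).2 inter_subset_left

lemma not_mem_pO (e : OpenSets X) (x : X) : x ∉ (pO e x).1 := fun h => h.2 (subset_closure rfl)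

lemma mem_closure_of_not_pO {e : OpenSets X} {x y : X} (hy : y ∈ e.1) (h : y ∉ (pO e x).1) :
    y ∈ closure ({x} : Set X) := by
  by_contra hc; exact h ⟨hy, hc⟩

lemma pO_inj [T0Space X] {e : OpenSets X} {x y : X} (hx : x ∈ e.1) (hy : y ∈ e.1)
    (h : pO e x = pO e y) : x = y := by
  have h1 : x ∈ closure ({y} : Set X) := mem_closure_of_not_pO hx (h ▸ not_mem_pO e x)
  have h2 : y ∈ closure ({x} : Set X) := mem_closure_of_not_pO hy (h ▸ not_mem_pO e y)
  exact ((specializes_iff_mem_closure.2 h2).antisymm (specializes_iff_mem_closure.2 h1)).eq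

def IsPrimeO (e w : OpenSets X) : Prop :=
  sle w e ∧ w ≠ e ∧ ∀ u v : OpenSets X, sle u e → sle v e → sle (u * v) w → sle u w ∨ sle v w

lemma isPrimeO_pO {e : OpenSets X} {x : X} (hx : x ∈ e.1) : IsPrimeO e (pO e x) := by
  refine ⟨sle_pO_e e x, ?_, ?_⟩
  · intro h; rw [← h] at hx; exact not_mem_pO e x hx
  · intro u v hu hv huv
    rw [sle_pO] at huv
    rw [mulOS_val] at huv
    by_cases hxu : x ∈ u.1
    · exact Or.inr (sle_pO.2 ⟨(sle_iff v e).1 hv, fun hxv => huv.2 ⟨hxu, hxv⟩⟩)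
    · exact Or.inl (sle_pO.2 ⟨(sle_iff u e).1 hu, hxu⟩)

lemma isPrimeO_repr [QuasiSober X] {e w : OpenSets X} (hw : IsPrimeO e w) :
    ∃ x, x ∈ e.1 ∧ w = pO e x := by
  obtain ⟨hwe, hne, hpr⟩ := hw
  have hsub : w.1 ⊆ e.1 := (sle_iff _ _).1 hwe
  set S : Set X := e.1 \ w.1 with hS
  have hSne : S.Nonempty := by
    rw [hS, Set.diff_nonempty]
    intro h
    exact hne (sle_antisymm' hwe ((sle_iff e w).2 h))
  have hpre : IsPreirreducible S := by
    intro u v hu hv h1 h2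
    have hnu : ¬ sle (⟨u, hu⟩ * e) w := by
      rcases h1 with ⟨p, hpS, hpu⟩
      intro hle
      exact hpS.2 ((sle_iff _ _).1 hle ⟨hpu, hpS.1⟩)
    have hnv : ¬ sle (⟨v, hv⟩ * e) w := by
      rcases h2 with ⟨p, hpS, hpv⟩
      intro hle
      exact hpS.2 ((sle_iff _ _).1 hle ⟨hpv, hpS.1⟩)
    have hkey : ¬ sle ((⟨u, hu⟩ * e) * (⟨v, hv⟩ * e)) w := fun hle =>
      (hpr _ _ ((sle_iff _ _).2 inter_subset_right) ((sle_iff _ _).2 inter_subset_right)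
        hle).elim hnu hnv
    rw [sle_iff] at hkey
    rcases not_subset.1 hkey with ⟨z, hz, hzw⟩
    exact ⟨z, ⟨hz.1.2, hzw⟩, hz.1.1, hz.2.1⟩
  obtain ⟨x, hx⟩ := QuasiSober.sober (IsIrreducible.closure ⟨hSne, hpre⟩) isClosed_closure
  have hxcl : closure ({x} : Set X) = closure S := hx
  have hxe : x ∈ e.1 := by
    obtain ⟨y, hyS⟩ := hSne
    have hycl : y ∈ closure ({x} : Set X) := hxcl ▸ subset_closure hyS
    rcases mem_closure_iff.1 hycl e.1 e.2 hyS.1 with ⟨z, hz1, hz2⟩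
    exact Set.mem_singleton_iff.1 hz2 ▸ hz1
  refine ⟨x, hxe, Subtype.ext ?_⟩
  show w.1 = e.1 ∩ (closure {x})ᶜ
  rw [hxcl]
  apply subset_antisymm
  · intro z hz
    refine ⟨hsub hz, fun hcl => ?_⟩
    rcases mem_closure_iff.1 hcl w.1 w.2 hz with ⟨p, hp1, hp2⟩
    exact hp2.2 hp1
  · rintro z ⟨hze, hzcl⟩
    by_contra hzw
    exact hzcl (subset_closure ⟨hze, hzw⟩)

lemma mapsE_fun {t : MunnEltE (OpenSets X)} {h k k' : OpenSets X}
    (h1 : t.mapsE h k) (h2 : t.mapsE h k') : k = k' := by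
  obtain ⟨p1, rfl⟩ := h1
  obtain ⟨p2, e2⟩ := h2
  exact e2

lemma mapsE_dom {t : MunnEltE (OpenSets X)} {h k : OpenSets X} (h1 : t.mapsE h k) :
    sle h t.e := by obtain ⟨p, _⟩ := h1; exact p

lemma mapsE_rng {t : MunnEltE (OpenSets X)} {h k : OpenSets X} (h1 : t.mapsE h k) :
    sle k t.f := by obtain ⟨p, rfl⟩ := h1; exact (t.θ _).2

lemma mapsE_total {t : MunnEltE (OpenSets X)} {h : OpenSets X} (p : sle h t.e) :
    ∃ k, t.mapsE h k := ⟨_, p, rfl⟩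

lemma mapsE_surj {t : MunnEltE (OpenSets X)} {k : OpenSets X} (p : sle k t.f) :
    ∃ h, t.mapsE h k := by
  refine ⟨(t.θ.symm ⟨k, p⟩).1, (t.θ.symm ⟨k, p⟩).2, ?_⟩
  exact congrArg Subtype.val (t.θ.apply_symm_apply ⟨k, p⟩)

lemma mapsE_mono {t : MunnEltE (OpenSets X)} {h k h' k' : OpenSets X}
    (m1 : t.mapsE h k) (m2 : t.mapsE h' k') : (sle h h' ↔ sle k k') := by
  obtain ⟨p, rfl⟩ := m1
  obtain ⟨p', rfl⟩ := m2
  exact t.θ_ord ⟨h, p⟩ ⟨h', p'⟩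

lemma mapsE_top (t : MunnEltE (OpenSets X)) : t.mapsE t.e t.f := by
  refine ⟨sle_refl' t.e, ?_⟩
  have h1 : sle (t.θ ⟨t.e, sle_refl' t.e⟩).1 t.f := (t.θ ⟨t.e, sle_refl' t.e⟩).2
  have h2 : sle t.f (t.θ ⟨t.e, sle_refl' t.e⟩).1 := by
    have h3 := (t.θ_ord (t.θ.symm ⟨t.f, sle_refl' t.f⟩) ⟨t.e, sle_refl' t.e⟩).1
      (t.θ.symm ⟨t.f, sle_refl' t.f⟩).2
    rwa [t.θ.apply_symm_apply] at h3
  exact sle_antisymm' h1 h2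

lemma mapsE_meet {t : MunnEltE (OpenSets X)} {h k h' k' : OpenSets X}
    (m1 : t.mapsE h k) (m2 : t.mapsE h' k') : t.mapsE (h * h') (k * k') := by
  have hhe : sle (h * h') t.e := by
    rw [sle_iff, mulOS_val]
    exact inter_subset_left.trans ((sle_iff _ _).1 (mapsE_dom m1))
  obtain ⟨k'', hk''⟩ := mapsE_total hhe
  have hle1 : sle k'' (k * k') := by
    rw [sle_iff, mulOS_val]
    refine subset_inter ?_ ?_
    · exact (sle_iff _ _).1 ((mapsE_mono hk'' m1).1 ((sle_iff _ _).2 (by rw [mulOS_val]; exact inter_subset_left)))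
    · exact (sle_iff _ _).1 ((mapsE_mono hk'' m2).1 ((sle_iff _ _).2 (by rw [mulOS_val]; exact inter_subset_right)))
  have hkkf : sle (k * k') t.f := by
    rw [sle_iff, mulOS_val]
    exact inter_subset_left.trans ((sle_iff _ _).1 (mapsE_rng m1))
  obtain ⟨h'', hh''⟩ := mapsE_surj hkkf
  have hle2 : sle (k * k') k'' := by
    refine (mapsE_mono hh'' hk'').1 ?_
    rw [sle_iff, mulOS_val]
    refine subset_inter ?_ ?_
    · exact (sle_iff _ _).1 ((mapsE_mono hh'' m1).2 ((sle_iff _ _).2 (by rw [mulOS_val]; exact inter_subset_left)))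
    · exact (sle_iff _ _).1 ((mapsE_mono hh'' m2).2 ((sle_iff _ _).2 (by rw [mulOS_val]; exact inter_subset_right)))
  rw [← sle_antisymm' hle1 hle2]
  exact hk''

lemma mapsE_prime {t : MunnEltE (OpenSets X)} {h k : OpenSets X}
    (m : t.mapsE h k) (hp : IsPrimeO t.e h) : IsPrimeO t.f k := by
  obtain ⟨-, hne, hpr⟩ := hp
  refine ⟨mapsE_rng m, ?_, ?_⟩
  · intro hkf
    subst hkf
    have h1 : sle t.e h := (mapsE_mono (mapsE_top t) m).2 (sle_refl' t.f)
    exact hne (sle_antisymm' (mapsE_dom m) h1)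
  · intro u v hu hv huv
    obtain ⟨u', hu'⟩ := mapsE_surj hu
    obtain ⟨v', hv'⟩ := mapsE_surj hv
    have huv' : sle (u' * v') h := (mapsE_mono (mapsE_meet hu' hv') m).2 huv
    rcases hpr u' v' (mapsE_dom hu') (mapsE_dom hv') huv' with hc | hc
    · exact Or.inl ((mapsE_mono hu' m).1 hc)
    · exact Or.inr ((mapsE_mono hv' m).1 hc)

lemma mapsE_prime' {t : MunnEltE (OpenSets X)} {h k : OpenSets X}
    (m : t.mapsE h k) (hp : IsPrimeO t.f k) : IsPrimeO t.e h := by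
  obtain ⟨-, hne, hpr⟩ := hp
  refine ⟨mapsE_dom m, ?_, ?_⟩
  · intro hhe
    subst hhe
    have h1 : sle t.f k := (mapsE_mono (mapsE_top t) m).1 (sle_refl' t.e)
    exact hne (sle_antisymm' (mapsE_rng m) h1)
  · intro u v hu hv huv
    obtain ⟨u', hu'⟩ := mapsE_total hu
    obtain ⟨v', hv'⟩ := mapsE_total hv
    have huv' : sle (u' * v') k := (mapsE_mono (mapsE_meet hu' hv') m).1 huv
    rcases hpr u' v' (mapsE_rng hu') (mapsE_rng hv') huv' with hc | hc
    · exact Or.inl ((mapsE_mono hu' m).2 hc)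
    · exact Or.inr ((mapsE_mono hv' m).2 hc)

def MRel (t : MunnEltE (OpenSets X)) (x y : X) : Prop :=
  x ∈ t.e.1 ∧ y ∈ t.f.1 ∧ ∀ h k : OpenSets X, t.mapsE h k → (x ∈ h.1 ↔ y ∈ k.1)

lemma relTotal [QuasiSober X] (t : MunnEltE (OpenSets X)) {x : X} (hx : x ∈ t.e.1) :
    ∃ y, MRel t x y := by
  obtain ⟨k, hk⟩ := mapsE_total (t := t) (sle_pO_e t.e x)
  obtain ⟨y, hy, hky⟩ := isPrimeO_repr (mapsE_prime hk (isPrimeO_pO hx))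
  subst hky
  refine ⟨y, hx, hy, ?_⟩
  intro h' k' m
  have hd := (sle_iff _ _).1 (mapsE_dom m)
  have hr := (sle_iff _ _).1 (mapsE_rng m)
  have hiff := mapsE_mono m hk
  rw [sle_pO, sle_pO] at hiff
  constructor
  · intro hxh
    by_contra hyk
    exact (hiff.2 ⟨hr, hyk⟩).2 hxh
  · intro hyk
    by_contra hxh
    exact (hiff.1 ⟨hd, hxh⟩).2 hyk

lemma relCoTotal [QuasiSober X] (t : MunnEltE (OpenSets X)) {y : X} (hy : y ∈ t.f.1) :
    ∃ x, MRel t x y := by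
  obtain ⟨h, hh⟩ := mapsE_surj (t := t) (sle_pO_e t.f y)
  obtain ⟨x, hx, hhx⟩ := isPrimeO_repr (mapsE_prime' hh (isPrimeO_pO hy))
  subst hhx
  refine ⟨x, hx, hy, ?_⟩
  intro h' k' m
  have hd := (sle_iff _ _).1 (mapsE_dom m)
  have hr := (sle_iff _ _).1 (mapsE_rng m)
  have hiff := mapsE_mono m hh
  rw [sle_pO, sle_pO] at hiff
  constructor
  · intro hxh
    by_contra hyk
    exact (hiff.2 ⟨hr, hyk⟩).2 hxh
  · intro hyk
    by_contra hxh
    exact (hiff.1 ⟨hd, hxh⟩).2 hyk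

lemma relUnique [T0Space X] {t : MunnEltE (OpenSets X)} {x y y' : X}
    (r1 : MRel t x y) (r2 : MRel t x y') : y = y' := by
  obtain ⟨hx, hy, c1⟩ := r1
  obtain ⟨-, hy', c2⟩ := r2
  have key : ∀ z z' : X, z ∈ t.f.1 → z' ∈ t.f.1 →
      (∀ h k : OpenSets X, t.mapsE h k → (x ∈ h.1 ↔ z ∈ k.1)) →
      (∀ h k : OpenSets X, t.mapsE h k → (x ∈ h.1 ↔ z' ∈ k.1)) →
      z' ∈ closure ({z} : Set X) := by
    intro z z' hz hz' cz cz'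
    obtain ⟨h, hh⟩ := mapsE_surj (t := t) (sle_pO_e t.f z)
    refine mem_closure_of_not_pO (e := t.f) hz' ?_
    intro hmem
    exact not_mem_pO t.f z ((cz h _ hh).1 ((cz' h _ hh).2 hmem))
  exact (((specializes_iff_mem_closure.2 (key y' y hy' hy c2 c1)).antisymm
    (specializes_iff_mem_closure.2 (key y y' hy hy' c1 c2))).eq).symm

lemma relInj [T0Space X] {t : MunnEltE (OpenSets X)} {x x' y : X}
    (r1 : MRel t x y) (r2 : MRel t x' y) : x = x' := by
  obtain ⟨hx, hy, c1⟩ := r1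
  obtain ⟨hx', -, c2⟩ := r2
  have key : ∀ z z' : X, z ∈ t.e.1 → z' ∈ t.e.1 →
      (∀ h k : OpenSets X, t.mapsE h k → (z ∈ h.1 ↔ y ∈ k.1)) →
      (∀ h k : OpenSets X, t.mapsE h k → (z' ∈ h.1 ↔ y ∈ k.1)) →
      z' ∈ closure ({z} : Set X) := by
    intro z z' hz hz' cz cz'
    obtain ⟨k, hk⟩ := mapsE_total (t := t) (sle_pO_e t.e z)
    refine mem_closure_of_not_pO (e := t.e) hz' ?_
    intro hmem
    exact not_mem_pO t.e z ((cz _ k hk).2 ((cz' _ k hk).1 hmem))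
  exact (((specializes_iff_mem_closure.2 (key x' x hx' hx c2 c1)).antisymm
    (specializes_iff_mem_closure.2 (key x x' hx hx' c1 c2))).eq).symm

variable [QuasiSober X] [T0Space X]

noncomputable def Fm (t : MunnEltE (OpenSets X)) (x : ↥t.e.1) : ↥t.f.1 :=
  ⟨(relTotal t x.2).choose, (relTotal t x.2).choose_spec.2.1⟩

lemma relFm (t : MunnEltE (OpenSets X)) (x : ↥t.e.1) : MRel t x.1 (Fm t x).1 :=
  (relTotal t x.2).choose_spec

noncomputable def Gm (t : MunnEltE (OpenSets X)) (y : ↥t.f.1) : ↥t.e.1 :=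
  ⟨(relCoTotal t y.2).choose, (relCoTotal t y.2).choose_spec.1⟩

lemma relGm (t : MunnEltE (OpenSets X)) (y : ↥t.f.1) : MRel t (Gm t y).1 y.1 :=
  (relCoTotal t y.2).choose_spec

lemma Fm_cont (t : MunnEltE (OpenSets X)) : Continuous (Fm t) := by
  apply continuous_induced_rng.2
  rw [continuous_def]
  intro V hV
  obtain ⟨h, hh⟩ := mapsE_surj (t := t) (k := ⟨V, hV⟩ * t.f)
    ((sle_iff _ _).2 (by rw [mulOS_val]; exact inter_subset_right))
  have key : (Subtype.val ∘ Fm t) ⁻¹' V = Subtype.val ⁻¹' h.1 := by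
    ext x
    have hr := (relFm t x).2.2 h _ hh
    rw [mulOS_val] at hr
    show (Fm t x).1 ∈ V ↔ x.1 ∈ h.1
    constructor
    · intro hv; exact hr.2 ⟨hv, (Fm t x).2⟩
    · intro hx; exact (hr.1 hx).1
  rw [key]
  exact h.2.preimage continuous_subtype_val

lemma Gm_cont (t : MunnEltE (OpenSets X)) : Continuous (Gm t) := by
  apply continuous_induced_rng.2
  rw [continuous_def]
  intro V hV
  obtain ⟨k, hk⟩ := mapsE_total (t := t) (h := ⟨V, hV⟩ * t.e)
    ((sle_iff _ _).2 (by rw [mulOS_val]; exact inter_subset_right))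
  have key : (Subtype.val ∘ Gm t) ⁻¹' V = Subtype.val ⁻¹' k.1 := by
    ext y
    have hr := (relGm t y).2.2 _ k hk
    rw [mulOS_val] at hr
    show (Gm t y).1 ∈ V ↔ y.1 ∈ k.1
    constructor
    · intro hv; exact hr.1 ⟨hv, (Gm t y).2⟩
    · intro hy; exact (hr.2 hy).1
  rw [key]
  exact k.2.preimage continuous_subtype_val

noncomputable def iMap (t : MunnEltE (OpenSets X)) : PHomeo X where
  src := t.e.1
  tgt := t.f.1
  src_open := t.e.2
  tgt_open := t.f.2
  toHomeomorph :=
    { toFun := Fm t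
      invFun := Gm t
      left_inv := fun x => Subtype.ext (relInj (relGm t (Fm t x)) (relFm t x))
      right_inv := fun y => Subtype.ext (relUnique (relFm t (Gm t y)) (relGm t y))
      continuous_toFun := Fm_cont t
      continuous_invFun := Gm_cont t }

lemma maps_iMap (t : MunnEltE (OpenSets X)) (x y : X) :
    (iMap t).maps x y ↔ MRel t x y := by
  constructor
  · rintro ⟨hx, rfl⟩
    exact relFm t ⟨x, hx⟩
  · intro hr
    exact ⟨hr.1, relUnique (relFm t ⟨x, hr.1⟩) hr⟩

omit [QuasiSober X] [T0Space X] in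
lemma PHomeo_ext {s s' : PHomeo X} (hm : ∀ x y, s.maps x y ↔ s'.maps x y) : s = s' := by
  have hsrc : s.src = s'.src := by
    ext x
    constructor
    · intro hx
      obtain ⟨hx', -⟩ := (hm x _).1 ⟨hx, rfl⟩
      exact hx'
    · intro hx
      obtain ⟨hx', -⟩ := (hm x _).2 ⟨hx, rfl⟩
      exact hx'
  have htgt : s.tgt = s'.tgt := by
    ext y
    constructor
    · intro hy
      have hmap : s.maps (s.toHomeomorph.symm ⟨y, hy⟩).1 y :=
        ⟨(s.toHomeomorph.symm ⟨y, hy⟩).2,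
          congrArg Subtype.val (s.toHomeomorph.apply_symm_apply ⟨y, hy⟩)⟩
      obtain ⟨hx', e'⟩ := (hm _ _).1 hmap
      exact e' ▸ (s'.toHomeomorph _).2
    · intro hy
      have hmap : s'.maps (s'.toHomeomorph.symm ⟨y, hy⟩).1 y :=
        ⟨(s'.toHomeomorph.symm ⟨y, hy⟩).2,
          congrArg Subtype.val (s'.toHomeomorph.apply_symm_apply ⟨y, hy⟩)⟩
      obtain ⟨hx', e'⟩ := (hm _ _).2 hmap
      exact e' ▸ (s.toHomeomorph _).2
  obtain ⟨src, tgt, o1, o2, T⟩ := s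
  obtain ⟨src', tgt', o1', o2', T'⟩ := s'
  dsimp at hsrc htgt
  subst hsrc; subst htgt
  suffices hT : T = T' by rw [hT]
  apply Homeomorph.toEquiv_injective
  apply Equiv.ext
  intro x
  have h1 : (PHomeo.mk src tgt o1 o2 T).maps x.1 (T x).1 := ⟨x.2, rfl⟩
  obtain ⟨p, hp⟩ := (hm _ _).1 h1
  exact Subtype.ext hp.symm

omit [QuasiSober X] [T0Space X] in
lemma MunnE_ext {s t : MunnEltE (OpenSets X)} (hm : ∀ u v, s.mapsE u v ↔ t.mapsE u v) :
    s = t := by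
  have he : s.e = t.e :=
    sle_antisymm' (mapsE_dom ((hm _ _).1 (mapsE_top s))) (mapsE_dom ((hm _ _).2 (mapsE_top t)))
  have hf : s.f = t.f :=
    sle_antisymm' (mapsE_rng ((hm _ _).1 (mapsE_top s))) (mapsE_rng ((hm _ _).2 (mapsE_top t)))
  obtain ⟨e, f, θ, ord⟩ := s
  obtain ⟨e', f', θ', ord'⟩ := t
  dsimp at he hf
  subst he; subst hf
  suffices hθ : θ = θ' by subst hθ; rfl
  apply Equiv.ext
  intro a
  have h1 : (MunnEltE.mk e f θ ord).mapsE a.1 (θ a).1 := ⟨a.2, rfl⟩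
  obtain ⟨p, hp⟩ := (hm _ _).1 h1
  exact Subtype.ext hp.symm

lemma mapsE_val {t : MunnEltE (OpenSets X)} {u v : OpenSets X} (m : t.mapsE u v) (y : X) :
    y ∈ v.1 ↔ ∃ x, x ∈ u.1 ∧ MRel t x y := by
  constructor
  · intro hy
    have hyf : y ∈ t.f.1 := (sle_iff _ _).1 (mapsE_rng m) hy
    obtain ⟨x, hx⟩ := relCoTotal t hyf
    exact ⟨x, (hx.2.2 u v m).2 hy, hx⟩
  · rintro ⟨x, hxu, hr⟩
    exact (hr.2.2 u v m).1 hxu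

lemma iMap_inj : Function.Injective (iMap (X := X)) := by
  intro s t hst
  have hrel : ∀ x y, MRel s x y ↔ MRel t x y := fun x y => by
    rw [← maps_iMap, ← maps_iMap, hst]
  have he : s.e = t.e := Subtype.ext (congrArg PHomeo.src hst)
  have hf : s.f = t.f := Subtype.ext (congrArg PHomeo.tgt hst)
  apply MunnE_ext
  intro u v
  constructor
  · intro m
    obtain ⟨v', m'⟩ := mapsE_total (t := t) (he ▸ mapsE_dom m)
    have : v = v' := by
      apply Subtype.ext
      ext y
      rw [mapsE_val m y, mapsE_val m' y]
      exact exists_congr fun x => and_congr_right fun _ => hrel x y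
    exact this ▸ m'
  · intro m
    obtain ⟨v', m'⟩ := mapsE_total (t := s) (he.symm ▸ mapsE_dom m)
    have : v = v' := by
      apply Subtype.ext
      ext y
      rw [mapsE_val m y, mapsE_val m' y]
      exact exists_congr fun x => and_congr_right fun _ => (hrel x y).symm
    exact this ▸ m'

omit [QuasiSober X] [T0Space X]

def Sset (s : PHomeo X) (A : Set X) : Set X :=
  {y | ∃ hy : y ∈ s.tgt, (s.toHomeomorph.symm ⟨y, hy⟩).1 ∈ A}

def Tset (s : PHomeo X) (A : Set X) : Set X :=
  {x | ∃ hx : x ∈ s.src, (s.toHomeomorph ⟨x, hx⟩).1 ∈ A}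

lemma Sset_open (s : PHomeo X) {A : Set X} (hA : IsOpen A) : IsOpen (Sset s A) := by
  have key : Sset s A = Subtype.val '' ((fun y : ↥s.tgt => (s.toHomeomorph.symm y).1) ⁻¹' A) := by
    ext y
    constructor
    · rintro ⟨hy, h⟩; exact ⟨⟨y, hy⟩, h, rfl⟩
    · rintro ⟨⟨y', hy'⟩, h, rfl⟩; exact ⟨hy', h⟩
  rw [key]
  exact s.tgt_open.isOpenMap_subtype_val _
    (hA.preimage (continuous_subtype_val.comp s.toHomeomorph.symm.continuous))

lemma Tset_open (s : PHomeo X) {A : Set X} (hA : IsOpen A) : IsOpen (Tset s A) := by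
  have key : Tset s A = Subtype.val '' ((fun x : ↥s.src => (s.toHomeomorph x).1) ⁻¹' A) := by
    ext x
    constructor
    · rintro ⟨hx, h⟩; exact ⟨⟨x, hx⟩, h, rfl⟩
    · rintro ⟨⟨x', hx'⟩, h, rfl⟩; exact ⟨hx', h⟩
  rw [key]
  exact s.src_open.isOpenMap_subtype_val _
    (hA.preimage (continuous_subtype_val.comp s.toHomeomorph.continuous))

lemma mem_Sset_apply (s : PHomeo X) {A : Set X} (hA : A ⊆ s.src) {x : X} (hx : x ∈ s.src) :
    (s.toHomeomorph ⟨x, hx⟩).1 ∈ Sset s A ↔ x ∈ A := by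
  constructor
  · rintro ⟨hy, hmem⟩
    have he : (⟨(s.toHomeomorph ⟨x, hx⟩).1, hy⟩ : ↥s.tgt) = s.toHomeomorph ⟨x, hx⟩ := rfl
    rw [he, s.toHomeomorph.symm_apply_apply] at hmem
    exact hmem
  · intro hxA
    refine ⟨(s.toHomeomorph ⟨x, hx⟩).2, ?_⟩
    have he : (⟨(s.toHomeomorph ⟨x, hx⟩).1, (s.toHomeomorph ⟨x, hx⟩).2⟩ : ↥s.tgt)
        = s.toHomeomorph ⟨x, hx⟩ := rfl
    rw [he, s.toHomeomorph.symm_apply_apply]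
    exact hxA

noncomputable def munnOf (s : PHomeo X) : MunnEltE (OpenSets X) where
  e := ⟨s.src, s.src_open⟩
  f := ⟨s.tgt, s.tgt_open⟩
  θ :=
    { toFun := fun a => ⟨⟨Sset s a.1.1, Sset_open s a.1.2⟩,
        (sle_iff _ _).2 (fun y hy => hy.1)⟩
      invFun := fun b => ⟨⟨Tset s b.1.1, Tset_open s b.1.2⟩,
        (sle_iff _ _).2 (fun x hx => hx.1)⟩
      left_inv := by
        rintro ⟨a, ha⟩
        apply Subtype.ext
        apply Subtype.ext
        show Tset s (Sset s a.1) = a.1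
        ext x
        constructor
        · rintro ⟨hx, hmem⟩
          exact (mem_Sset_apply s ((sle_iff _ _).1 ha) hx).1 hmem
        · intro hxa
          have hx : x ∈ s.src := (sle_iff _ _).1 ha hxa
          exact ⟨hx, (mem_Sset_apply s ((sle_iff _ _).1 ha) hx).2 hxa⟩
      right_inv := by
        rintro ⟨b, hb⟩
        apply Subtype.ext
        apply Subtype.ext
        show Sset s (Tset s b.1) = b.1
        ext y
        constructor
        · rintro ⟨hy, hmem⟩
          obtain ⟨hx, hmem'⟩ := hmem
          have he : (⟨(s.toHomeomorph.symm ⟨y, hy⟩).1, hx⟩ : ↥s.src)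
              = s.toHomeomorph.symm ⟨y, hy⟩ := rfl
          rw [he, s.toHomeomorph.apply_symm_apply] at hmem'
          exact hmem'
        · intro hyb
          have hy : y ∈ s.tgt := (sle_iff _ _).1 hb hyb
          refine ⟨hy, (s.toHomeomorph.symm ⟨y, hy⟩).2, ?_⟩
          have he : (⟨(s.toHomeomorph.symm ⟨y, hy⟩).1, (s.toHomeomorph.symm ⟨y, hy⟩).2⟩ : ↥s.src)
              = s.toHomeomorph.symm ⟨y, hy⟩ := rfl
          rw [he, s.toHomeomorph.apply_symm_apply]
          exact hyb }
  θ_ord := by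
    rintro ⟨a, ha⟩ ⟨b, hb⟩
    rw [sle_iff, sle_iff]
    show a.1 ⊆ b.1 ↔ Sset s a.1 ⊆ Sset s b.1
    constructor
    · rintro hab y ⟨hy, hmem⟩
      exact ⟨hy, hab hmem⟩
    · intro hss x hxa
      have hx : x ∈ s.src := (sle_iff _ _).1 ha hxa
      have h1 : (s.toHomeomorph ⟨x, hx⟩).1 ∈ Sset s a.1 :=
        (mem_Sset_apply s ((sle_iff _ _).1 ha) hx).2 hxa
      exact (mem_Sset_apply s ((sle_iff _ _).1 hb) hx).1 (hss h1)

lemma rel_munnOf (s : PHomeo X) {x : X} (hx : x ∈ s.src) :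
    MRel (munnOf s) x (s.toHomeomorph ⟨x, hx⟩).1 := by
  refine ⟨hx, (s.toHomeomorph ⟨x, hx⟩).2, ?_⟩
  intro h k m
  obtain ⟨p, rfl⟩ := m
  show x ∈ h.1 ↔ (s.toHomeomorph ⟨x, hx⟩).1 ∈ Sset s h.1
  exact (mem_Sset_apply s ((sle_iff _ _).1 p) hx).symm

variable [QuasiSober X] [T0Space X]

lemma iMap_munnOf (s : PHomeo X) : iMap (munnOf s) = s := by
  apply PHomeo_ext
  intro x y
  rw [maps_iMap]
  constructor
  · intro hr
    have hx : x ∈ s.src := hr.1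
    have hr' := rel_munnOf s hx
    rw [relUnique hr hr']
    exact ⟨hx, rfl⟩
  · rintro ⟨hx, rfl⟩
    exact rel_munnOf s hx

lemma rel_comp {a b c : MunnEltE (OpenSets X)}
    (hc : ∀ h k, c.mapsE h k ↔ ∃ m, b.mapsE h m ∧ a.mapsE m k) (x z : X) :
    MRel c x z ↔ ∃ y, MRel b x y ∧ MRel a y z := by
  have haebf : sle (a.e * b.f) b.f := (sle_iff _ _).2 (by rw [mulOS_val]; exact inter_subset_right)
  have haebf' : sle (a.e * b.f) a.e := (sle_iff _ _).2 (by rw [mulOS_val]; exact inter_subset_left)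
  constructor
  · rintro ⟨hxc, hzc, hcond⟩
    obtain ⟨m, hbm, ham⟩ := (hc c.e c.f).1 (mapsE_top c)
    have hceb : sle c.e b.e := mapsE_dom hbm
    have hxb : x ∈ b.e.1 := (sle_iff _ _).1 hceb hxc
    obtain ⟨y, hy⟩ := relTotal b hxb
    refine ⟨y, hy, ?_⟩
    have hmae : sle m a.e := mapsE_dom ham
    have hmbf : sle m b.f := mapsE_rng hbm
    obtain ⟨g, hg⟩ := mapsE_surj haebf
    have hceg : sle c.e g := (mapsE_mono hbm hg).2
      ((sle_iff _ _).2 (by rw [mulOS_val]; exact subset_inter ((sle_iff _ _).1 hmae) ((sle_iff _ _).1 hmbf)))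
    have hxg : x ∈ g.1 := (sle_iff _ _).1 hceg hxc
    have hyaebf : y ∈ (a.e * b.f).1 := (hy.2.2 g _ hg).1 hxg
    rw [mulOS_val] at hyaebf
    have hzaf : z ∈ a.f.1 := (sle_iff _ _).1 (mapsE_rng ham) hzc
    refine ⟨hyaebf.1, hzaf, ?_⟩
    intro h k hm
    have hhae := mapsE_dom hm
    have hh1 : sle (h * b.f) b.f := (sle_iff _ _).2 (by rw [mulOS_val]; exact inter_subset_right)
    obtain ⟨g', hg'⟩ := mapsE_surj hh1
    have hh2 : sle (h * b.f) a.e := (sle_iff _ _).2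
      (by rw [mulOS_val]; exact inter_subset_left.trans ((sle_iff _ _).1 hhae))
    obtain ⟨k', hk'⟩ := mapsE_total hh2
    have hck : c.mapsE g' k' := (hc _ _).2 ⟨_, hg', hk'⟩
    have e1 : x ∈ g'.1 ↔ z ∈ k'.1 := hcond _ _ hck
    have e2 : x ∈ g'.1 ↔ y ∈ (h * b.f).1 := hy.2.2 _ _ hg'
    have hyh : y ∈ h.1 ↔ y ∈ (h * b.f).1 := by
      rw [mulOS_val]
      exact ⟨fun hh => ⟨hh, hy.2.1⟩, fun hh => hh.1⟩
    have hkk : sle k' k := by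
      have hmeet := mapsE_meet hk' hm
      have heq : (h * b.f) * h = h * b.f := Subtype.ext (by
        show (h.1 ∩ b.f.1) ∩ h.1 = h.1 ∩ b.f.1
        ext w
        exact ⟨fun hw => hw.1, fun hw => ⟨hw, hw.1⟩⟩)
      rw [heq] at hmeet
      exact mapsE_fun hk' hmeet
    have hzk2 : z ∈ k.1 → z ∈ k'.1 := by
      intro hz
      have hmeet2 := mapsE_meet hm ham
      have hle : sle (h * m) (h * b.f) := (sle_iff _ _).2 (by
        rw [mulOS_val, mulOS_val]
        exact inter_subset_inter_right _ ((sle_iff _ _).1 hmbf))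
      have hkcf := (mapsE_mono hmeet2 hk').1 hle
      have := (sle_iff _ _).1 hkcf
      rw [mulOS_val] at this
      exact this ⟨hz, hzc⟩
    constructor
    · intro h1; exact (sle_iff _ _).1 hkk (e1.1 (e2.2 (hyh.1 h1)))
    · intro h1; exact hyh.2 (e2.1 (e1.2 (hzk2 h1)))
  · rintro ⟨y, hb, ha⟩
    obtain ⟨hxb, hyb, hbc⟩ := hb
    obtain ⟨hya, hza, hac⟩ := ha
    obtain ⟨g, hg⟩ := mapsE_surj haebf
    have hxg : x ∈ g.1 := (hbc _ _ hg).2 (by rw [mulOS_val]; exact ⟨hya, hyb⟩)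
    obtain ⟨k0, hk0⟩ := mapsE_total haebf'
    have hcg : c.mapsE g k0 := (hc _ _).2 ⟨_, hg, hk0⟩
    have hxce : x ∈ c.e.1 := (sle_iff _ _).1 (mapsE_dom hcg) hxg
    have hzk0 : z ∈ k0.1 := (hac _ _ hk0).1 (by rw [mulOS_val]; exact ⟨hya, hyb⟩)
    have hzcf : z ∈ c.f.1 := (sle_iff _ _).1 (mapsE_rng hcg) hzk0
    refine ⟨hxce, hzcf, ?_⟩
    intro h k hm
    obtain ⟨m', hbm', ham'⟩ := (hc _ _).1 hm
    exact (hbc _ _ hbm').trans (hac _ _ ham')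

end MunnIsoAux

/-- for a sober space `X`, the Munn semigroup of the semilattice `Ω(X)` of
open subsets of `X` is isomorphic to the inverse semigroup `I(X, τ)`. -/
theorem munn_of_opens_iso {X : Type*} [TopologicalSpace X] [QuasiSober X] [T0Space X]
    (mulE : MunnEltE (OpenSets X) → MunnEltE (OpenSets X) → MunnEltE (OpenSets X))
    (hE : IsMunnMulE mulE)
    (mulI : PHomeo X → PHomeo X → PHomeo X) (hI : IsPHMul mulI) :
    ∃ i : MunnEltE (OpenSets X) → PHomeo X,
      Function.Bijective i ∧ ∀ a b, i (mulE a b) = mulI (i a) (i b) := by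
  refine ⟨iMap, ⟨iMap_inj, fun s => ⟨munnOf s, iMap_munnOf s⟩⟩, ?_⟩
  intro a b
  apply PHomeo_ext
  intro x z
  rw [maps_iMap, rel_comp (hE a b), hI (iMap a) (iMap b)]
  constructor
  · rintro ⟨y, h1, h2⟩
    exact ⟨y, (maps_iMap b x y).2 h1, (maps_iMap a y z).2 h2⟩
  · rintro ⟨y, h1, h2⟩
    exact ⟨y, (maps_iMap b x y).1 h1, (maps_iMap a y z).1 h2⟩
end

section
/- Let π : X → B be a bundle (a surjective local homeomorphism). Then: (1) the maps Γ(π) × La(π) → Γ(π) defined by σ·(θ,θ̂) = θ⁻¹ ∘ σ ∘ θ̂ restricted to θ̂⁻¹(V ∩ dom σ) (for (θ,θ̂) with θ̂ : U → V), together with p : Γ(π) → E(La(π)) sending σ to the idempotent (id_{π⁻¹(dom σ)}, id_{dom σ}), define a supported action (Γ(π), La(π), p); (2) the characteristic congruence of this supported action is idempotent-separating; (3) if B is sober, this characteristic congruence is the equality relation. -/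
/-- A local section of a bundle `π : X → B`: a continuous map `σ : U → X` with `U ⊆ B`
open and `π ∘ σ = id`. -/
structure LocalSection {X B : Type*} [TopologicalSpace X] [TopologicalSpace B] (π : X → B) where
  dom : Set B
  dom_open : IsOpen dom
  toFun : ↥dom → X
  cont : Continuous toFun
  sect : ∀ b : ↥dom, π (toFun b) = b.1

theorem LocalSection.ext' {X B : Type*} [TopologicalSpace X] [TopologicalSpace B] {π : X → B}
    {s t : LocalSection π} (hd : s.dom = t.dom)
    (h : ∀ (b : B) (hs : b ∈ s.dom) (ht : b ∈ t.dom), s.toFun ⟨b, hs⟩ = t.toFun ⟨b, ht⟩) :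
    s = t := by
  cases s with | mk d o f c se =>
  cases t with | mk d' o' f' c' se' =>
  dsimp at hd
  subst hd
  have hf : f = f' := funext fun b => h b.1 b.2 b.2
  subst hf
  rfl

/-- A principal partial automorphism of the bundle `π : X → B` (an element of `La(π)`):
a pair of homeomorphisms `θ : π⁻¹(U) → π⁻¹(V)`, `θ̂ : U → V` with `π ∘ θ = θ̂ ∘ π`. -/
structure PPAuto {X B : Type*} [TopologicalSpace X] [TopologicalSpace B] (π : X → B) where
  U : Set B
  V : Set B
  U_open : IsOpen U
  V_open : IsOpen V
  top : ↥(π ⁻¹' U) ≃ₜ ↥(π ⁻¹' V)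
  bot : ↥U ≃ₜ ↥V
  comm : ∀ x : ↥(π ⁻¹' U), π (top x).1 = (bot ⟨π x.1, x.2⟩).1

namespace PPAuto
variable {X B : Type*} [TopologicalSpace X] [TopologicalSpace B] {π : X → B}

/-- The graph of the upstairs component. -/
def mapsTop (t : PPAuto π) (x y : X) : Prop :=
  ∃ h : x ∈ π ⁻¹' t.U, (t.top ⟨x, h⟩).1 = y

/-- The graph of the downstairs component. -/
def mapsBot (t : PPAuto π) (u v : B) : Prop :=
  ∃ h : u ∈ t.U, (t.bot ⟨u, h⟩).1 = v

end PPAuto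

/-- `mul` is the multiplication of `La(π)`: coordinatewise composition of partial
homeomorphisms (apply `b` first, then `a`). -/
def IsPPMul {X B : Type*} [TopologicalSpace X] [TopologicalSpace B] {π : X → B}
    (mul : PPAuto π → PPAuto π → PPAuto π) : Prop :=
  ∀ a b : PPAuto π,
    (∀ x z : X, (mul a b).mapsTop x z ↔ ∃ y, b.mapsTop x y ∧ a.mapsTop y z) ∧
    (∀ u w : B, (mul a b).mapsBot u w ↔ ∃ v, b.mapsBot u v ∧ a.mapsBot v w)

/-- `inv` is the inversion of `La(π)`. -/
def IsPPInv {X B : Type*} [TopologicalSpace X] [TopologicalSpace B] {π : X → B}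
    (inv : PPAuto π → PPAuto π) : Prop :=
  ∀ t : PPAuto π,
    (∀ x y : X, (inv t).mapsTop x y ↔ t.mapsTop y x) ∧
    (∀ u v : B, (inv t).mapsBot u v ↔ t.mapsBot v u)

/-- `act` is the action of `La(π)` on the sections `Γ(π)`:
`σ · (θ, θ̂) = θ⁻¹ ∘ σ ∘ θ̂` defined on `θ̂⁻¹(V ∩ dom σ)` (where `θ̂ : U → V`). -/
def IsSectAct {X B : Type*} [TopologicalSpace X] [TopologicalSpace B] {π : X → B}
    (act : LocalSection π → PPAuto π → LocalSection π) : Prop :=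
  ∀ (σ : LocalSection π) (t : PPAuto π),
    ((act σ t).dom = {u : B | ∃ hu : u ∈ t.U, (t.bot ⟨u, hu⟩).1 ∈ σ.dom}) ∧
    (∀ (u : B) (hu : u ∈ (act σ t).dom) (huU : u ∈ t.U)
        (hv : (t.bot ⟨u, huU⟩).1 ∈ σ.dom)
        (hx : σ.toFun ⟨(t.bot ⟨u, huU⟩).1, hv⟩ ∈ π ⁻¹' t.V),
      (act σ t).toFun ⟨u, hu⟩ =
        (t.top.symm ⟨σ.toFun ⟨(t.bot ⟨u, huU⟩).1, hv⟩, hx⟩).1)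

/-- `p` is the support map `Γ(π) → E(La(π))` sending a section `σ` to the identity
partial automorphism `(id_{π⁻¹(dom σ)}, id_{dom σ})`. -/
def IsSectSupp {X B : Type*} [TopologicalSpace X] [TopologicalSpace B] {π : X → B}
    (p : LocalSection π → PPAuto π) : Prop :=
  ∀ σ : LocalSection π, (p σ).U = σ.dom ∧ (p σ).V = σ.dom ∧
    (∀ x : ↥(π ⁻¹' (p σ).U), ((p σ).top x).1 = x.1) ∧
    (∀ u : ↥(p σ).U, ((p σ).bot u).1 = u.1)


section Aux

variable {X B : Type*} [TopologicalSpace X] [TopologicalSpace B] {π : X → B}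

namespace PPAuto

theorem mapsBot_bot (t : PPAuto π) {u : B} (hu : u ∈ t.U) :
    t.mapsBot u (t.bot ⟨u, hu⟩).1 := ⟨hu, rfl⟩

theorem mapsTop_top (t : PPAuto π) {x : X} (hx : x ∈ π ⁻¹' t.U) :
    t.mapsTop x (t.top ⟨x, hx⟩).1 := ⟨hx, rfl⟩

theorem mapsBot.mem_U {t : PPAuto π} {u v : B} (h : t.mapsBot u v) : u ∈ t.U := h.1

theorem mapsBot.mem_V {t : PPAuto π} {u v : B} (h : t.mapsBot u v) : v ∈ t.V := by
  obtain ⟨h, rfl⟩ := h; exact (t.bot _).2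

theorem mapsTop.mem_U {t : PPAuto π} {x y : X} (h : t.mapsTop x y) : x ∈ π ⁻¹' t.U := h.1

theorem mapsTop.mem_V {t : PPAuto π} {x y : X} (h : t.mapsTop x y) : y ∈ π ⁻¹' t.V := by
  obtain ⟨h, rfl⟩ := h; exact (t.top _).2

theorem mapsBot.right_unique {t : PPAuto π} {u v v' : B} (h : t.mapsBot u v)
    (h' : t.mapsBot u v') : v = v' := by
  obtain ⟨h, rfl⟩ := h; obtain ⟨h', rfl⟩ := h'; rfl

theorem mapsBot.left_unique {t : PPAuto π} {u u' v : B} (h : t.mapsBot u v)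
    (h' : t.mapsBot u' v) : u = u' := by
  obtain ⟨h1, e⟩ := h; obtain ⟨h2, e'⟩ := h'
  exact congrArg Subtype.val (t.bot.injective (Subtype.ext (e.trans e'.symm)))

theorem mapsTop.right_unique {t : PPAuto π} {x y y' : X} (h : t.mapsTop x y)
    (h' : t.mapsTop x y') : y = y' := by
  obtain ⟨h, rfl⟩ := h; obtain ⟨h', rfl⟩ := h'; rfl

theorem mapsTop.left_unique {t : PPAuto π} {x x' y : X} (h : t.mapsTop x y)
    (h' : t.mapsTop x' y) : x = x' := by
  obtain ⟨h1, e⟩ := h; obtain ⟨h2, e'⟩ := h'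
  exact congrArg Subtype.val (t.top.injective (Subtype.ext (e.trans e'.symm)))

theorem mapsTop.mapsBot {t : PPAuto π} {x y : X} (h : t.mapsTop x y) :
    t.mapsBot (π x) (π y) := by
  obtain ⟨h, rfl⟩ := h
  exact ⟨h, (t.comm ⟨x, h⟩).symm⟩

theorem mapsBot_symm (t : PPAuto π) {v : B} (hv : v ∈ t.V) :
    t.mapsBot (t.bot.symm ⟨v, hv⟩).1 v :=
  ⟨(t.bot.symm ⟨v, hv⟩).2, congrArg Subtype.val (t.bot.apply_symm_apply ⟨v, hv⟩)⟩

theorem mapsTop_symm (t : PPAuto π) (y : ↥(π ⁻¹' t.V)) :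
    t.mapsTop (t.top.symm y).1 y.1 :=
  ⟨(t.top.symm y).2, congrArg Subtype.val (t.top.apply_symm_apply y)⟩

theorem ext_graph {a b : PPAuto π}
    (ht : ∀ x y, a.mapsTop x y ↔ b.mapsTop x y)
    (hb : ∀ u v, a.mapsBot u v ↔ b.mapsBot u v) : a = b := by
  have hU : a.U = b.U := Set.ext fun u =>
    ⟨fun h => ((hb u _).mp (a.mapsBot_bot h)).mem_U,
     fun h => ((hb u _).mpr (b.mapsBot_bot h)).mem_U⟩
  have hV : a.V = b.V := Set.ext fun v =>
    ⟨fun h => ((hb _ v).mp (a.mapsBot_symm h)).mem_V,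
     fun h => ((hb _ v).mpr (b.mapsBot_symm h)).mem_V⟩
  obtain ⟨U, V, hUo, hVo, top, bot, comm⟩ := a
  obtain ⟨U', V', hUo', hVo', top', bot', comm'⟩ := b
  obtain rfl : U = U' := hU
  obtain rfl : V = V' := hV
  obtain rfl : bot = bot' := Homeomorph.ext fun u => Subtype.ext
    ((hb u.1 _).mp ⟨u.2, rfl⟩).choose_spec.symm
  obtain rfl : top = top' := Homeomorph.ext fun x => Subtype.ext
    ((ht x.1 _).mp ⟨x.2, rfl⟩).choose_spec.symm
  rfl

theorem idem_mapsBot {mul : PPAuto π → PPAuto π → PPAuto π} (hmul : IsPPMul mul)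
    {a : PPAuto π} (ha : mul a a = a) {u v : B} :
    a.mapsBot u v ↔ u ∈ a.U ∧ u = v := by
  have key : ∀ w, w ∈ a.U → a.mapsBot w w := by
    intro w hw
    have h1 : a.mapsBot w (a.bot ⟨w, hw⟩).1 := a.mapsBot_bot hw
    have h2 := (hmul a a).2 w (a.bot ⟨w, hw⟩).1
    rw [ha] at h2
    obtain ⟨v', hv1, hv2⟩ := h2.mp h1
    obtain rfl : (a.bot ⟨w, hw⟩).1 = v' := h1.right_unique hv1
    exact ⟨hw, (h1.left_unique hv2).symm⟩
  constructor
  · intro h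
    exact ⟨h.mem_U, (key u h.mem_U).right_unique h⟩
  · rintro ⟨h, rfl⟩
    exact key u h

theorem idem_mapsTop {mul : PPAuto π → PPAuto π → PPAuto π} (hmul : IsPPMul mul)
    {a : PPAuto π} (ha : mul a a = a) {x y : X} :
    a.mapsTop x y ↔ x ∈ π ⁻¹' a.U ∧ x = y := by
  have key : ∀ z, z ∈ π ⁻¹' a.U → a.mapsTop z z := by
    intro z hz
    have h1 : a.mapsTop z (a.top ⟨z, hz⟩).1 := a.mapsTop_top hz
    have h2 := (hmul a a).1 z (a.top ⟨z, hz⟩).1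
    rw [ha] at h2
    obtain ⟨y', hy1, hy2⟩ := h2.mp h1
    obtain rfl : (a.top ⟨z, hz⟩).1 = y' := h1.right_unique hy1
    exact ⟨hz, (h1.left_unique hy2).symm⟩
  constructor
  · intro h
    exact ⟨h.mem_U, (key x h.mem_U).right_unique h⟩
  · rintro ⟨h, rfl⟩
    exact key x h

theorem symm_proj (t : PPAuto π) (y : ↥(π ⁻¹' t.V)) (u : ↥t.U)
    (h : π y.1 = (t.bot u).1) : π (t.top.symm y).1 = u.1 := by
  have hc := t.comm (t.top.symm y)
  rw [t.top.apply_symm_apply] at hc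
  exact congrArg Subtype.val (t.bot.injective (Subtype.ext (hc.symm.trans h)))

end PPAuto

/-- Restriction of a local section to an open set. -/
def LocalSection.restr (σ : LocalSection π) (W : Set B) (hW : IsOpen W) : LocalSection π where
  dom := σ.dom ∩ W
  dom_open := σ.dom_open.inter hW
  toFun := fun b => σ.toFun ⟨b.1, b.2.1⟩
  cont := σ.cont.comp (continuous_subtype_val.subtype_mk fun b => b.2.1)
  sect := fun b => σ.sect _

theorem LocalSection.toFun_congr' {s t : LocalSection π} (h : s = t) {u : B}
    (hs : u ∈ s.dom) (ht : u ∈ t.dom) : s.toFun ⟨u, hs⟩ = t.toFun ⟨u, ht⟩ := by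
  subst h; rfl

theorem exists_localSection (hπ : IsLocalHomeomorph π) (x : X) :
    ∃ (σ : LocalSection π) (h : π x ∈ σ.dom), σ.toFun ⟨π x, h⟩ = x := by
  obtain ⟨e, hx, rfl⟩ := hπ x
  exact ⟨⟨e.target, e.open_target, fun b => e.symm b.1,
    continuousOn_iff_continuous_restrict.mp e.symm.continuousOn,
    fun b => e.right_inv b.2⟩, e.map_source hx, e.left_inv hx⟩

/-- The action of `La(π)` on local sections. -/
noncomputable def sact (σ : LocalSection π) (t : PPAuto π) : LocalSection π where
  dom := {u : B | ∃ hu : u ∈ t.U, (t.bot ⟨u, hu⟩).1 ∈ σ.dom}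
  dom_open := by
    have he : {u : B | ∃ hu : u ∈ t.U, (t.bot ⟨u, hu⟩).1 ∈ σ.dom}
        = Subtype.val '' ((fun u : ↥t.U => (t.bot u).1) ⁻¹' σ.dom) := by
      ext u
      constructor
      · rintro ⟨hu, hv⟩; exact ⟨⟨u, hu⟩, hv, rfl⟩
      · rintro ⟨⟨u', hu⟩, hv, rfl⟩; exact ⟨hu, hv⟩
    rw [he]
    exact t.U_open.isOpenMap_subtype_val _
      ((continuous_subtype_val.comp t.bot.continuous).isOpen_preimage _ σ.dom_open)
  toFun := fun u =>
    (t.top.symm ⟨σ.toFun ⟨(t.bot ⟨u.1, u.2.choose⟩).1, u.2.choose_spec⟩, by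
      show π _ ∈ t.V
      rw [σ.sect]
      exact (t.bot ⟨u.1, u.2.choose⟩).2⟩).1
  cont := by
    refine Continuous.subtype_val (t.top.symm.continuous.comp (Continuous.subtype_mk ?_ _))
    refine σ.cont.comp (Continuous.subtype_mk ?_ _)
    exact Continuous.subtype_val (t.bot.continuous.comp
      (continuous_subtype_val.subtype_mk _))
  sect := fun u => t.symm_proj _ ⟨u.1, u.2.choose⟩ (σ.sect _)

theorem mem_sact_dom {σ : LocalSection π} {t : PPAuto π} {u : B} :
    u ∈ (sact σ t).dom ↔ ∃ v, t.mapsBot u v ∧ v ∈ σ.dom :=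
  ⟨fun ⟨hu, hv⟩ => ⟨_, ⟨hu, rfl⟩, hv⟩,
   fun ⟨_, ⟨hu, hv⟩, hm⟩ => ⟨hu, by rw [hv]; exact hm⟩⟩

theorem sact_mapsTop (σ : LocalSection π) (t : PPAuto π) {u : B} (hu : u ∈ (sact σ t).dom)
    (huU : u ∈ t.U) (hv : (t.bot ⟨u, huU⟩).1 ∈ σ.dom) :
    t.mapsTop ((sact σ t).toFun ⟨u, hu⟩) (σ.toFun ⟨(t.bot ⟨u, huU⟩).1, hv⟩) :=
  t.mapsTop_symm _

theorem sact_mapsTop' (σ : LocalSection π) (t : PPAuto π) {u v : B}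
    (hu : u ∈ (sact σ t).dom) (hv : t.mapsBot u v) (hvσ : v ∈ σ.dom) :
    t.mapsTop ((sact σ t).toFun ⟨u, hu⟩) (σ.toFun ⟨v, hvσ⟩) := by
  obtain ⟨huU, rfl⟩ := hv
  exact sact_mapsTop σ t hu huU hvσ

/-- The support map. -/
def psupp (σ : LocalSection π) : PPAuto π where
  U := σ.dom
  V := σ.dom
  U_open := σ.dom_open
  V_open := σ.dom_open
  top := Homeomorph.refl _
  bot := Homeomorph.refl _
  comm := fun _ => rfl

theorem psupp_mapsBot {σ : LocalSection π} {u v : B} :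
    (psupp σ).mapsBot u v ↔ u ∈ σ.dom ∧ u = v :=
  ⟨fun ⟨h, e⟩ => ⟨h, e⟩, fun ⟨h, e⟩ => ⟨h, e⟩⟩

theorem psupp_mapsTop {σ : LocalSection π} {x y : X} :
    (psupp σ).mapsTop x y ↔ x ∈ π ⁻¹' σ.dom ∧ x = y :=
  ⟨fun ⟨h, e⟩ => ⟨h, e⟩, fun ⟨h, e⟩ => ⟨h, e⟩⟩

end Aux

/-- for a bundle `π : X → B`: (1) the maps `σ · (θ, θ̂) = θ⁻¹ ∘ σ ∘ θ̂` and
`p(σ) = (id_{π⁻¹(dom σ)}, id_{dom σ})` define a supported action of `La(π)` on `Γ(π)`;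
(2) its characteristic congruence is idempotent-separating; (3) if `B` is sober the
characteristic congruence is equality. -/
theorem sections_supported_action {X B : Type*} [TopologicalSpace X] [TopologicalSpace B]
    (π : X → B) (hπ : IsLocalHomeomorph π) (hsurj : Function.Surjective π)
    (mul : PPAuto π → PPAuto π → PPAuto π) (hmul : IsPPMul mul)
    (inv : PPAuto π → PPAuto π) (hinv : IsPPInv inv) :
    ∃ (act : LocalSection π → PPAuto π → LocalSection π) (p : LocalSection π → PPAuto π),
      IsSectAct act ∧ IsSectSupp p ∧
      (∀ (σ : LocalSection π) (a b : PPAuto π), act (act σ a) b = act σ (mul a b)) ∧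
      (∀ σ : LocalSection π, act σ (p σ) = σ) ∧
      (∀ (σ : LocalSection π) (a : PPAuto π), p (act σ a) = mul (mul (inv a) (p σ)) a) ∧
      (∀ σ : LocalSection π, mul (p σ) (p σ) = p σ) ∧
      (∀ a b : PPAuto π, mul a a = a → mul b b = b →
        (∀ σ : LocalSection π, act σ a = act σ b) → a = b) ∧
      (QuasiSober B → T0Space B →
        ∀ a b : PPAuto π, (∀ σ : LocalSection π, act σ a = act σ b) → a = b) := by
  classical
  refine ⟨sact, psupp, fun σ t => ⟨rfl, fun u hu huU hv hx => rfl⟩,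
    fun σ => ⟨rfl, rfl, fun x => rfl, fun u => rfl⟩, ?_, ?_, ?_, ?_, ?_, ?_⟩
  · -- act (act σ a) b = act σ (mul a b)
    intro σ a b
    apply LocalSection.ext'
    · ext u
      simp only [mem_sact_dom, (hmul a b).2]
      constructor
      · rintro ⟨v, hbv, w, haw, hw⟩
        exact ⟨w, ⟨v, hbv, haw⟩, hw⟩
      · rintro ⟨w, ⟨v, hbv, haw⟩, hw⟩
        exact ⟨v, hbv, w, haw, hw⟩
    · intro u hs ht
      obtain ⟨w, hw, hwσ⟩ := mem_sact_dom.mp ht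
      obtain ⟨v, hv, hvd⟩ := mem_sact_dom.mp hs
      obtain ⟨w', hw', hw'σ⟩ := mem_sact_dom.mp hvd
      have hLb := sact_mapsTop' (sact σ a) b hs hv hvd
      have hLa := sact_mapsTop' σ a hvd hw' hw'σ
      have hL : (mul a b).mapsTop ((sact (sact σ a) b).toFun ⟨u, hs⟩) (σ.toFun ⟨w', hw'σ⟩) :=
        ((hmul a b).1 _ _).mpr ⟨_, hLb, hLa⟩
      have hR := sact_mapsTop' σ (mul a b) ht hw hwσ
      have hw2 : (mul a b).mapsBot u w' := ((hmul a b).2 _ _).mpr ⟨v, hv, hw'⟩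
      obtain rfl : w = w' := hw.right_unique hw2
      exact hL.left_unique hR
  · -- act σ (p σ) = σ
    intro σ
    apply LocalSection.ext'
    · ext u
      simp only [mem_sact_dom, psupp_mapsBot]
      constructor
      · rintro ⟨v, ⟨h, rfl⟩, -⟩; exact h
      · intro h; exact ⟨u, ⟨h, rfl⟩, h⟩
    · intro u hs ht
      obtain ⟨he, e⟩ := sact_mapsTop' σ (psupp σ) hs (psupp_mapsBot.mpr ⟨ht, rfl⟩) ht
      exact e
  · -- p (act σ a) = mul (mul (inv a) (p σ)) a
    intro σ a
    apply PPAuto.ext_graph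
    · intro x z
      rw [psupp_mapsTop, (hmul _ a).1 x z]
      simp only [(hmul (inv a) (psupp σ)).1, (hinv a).1, psupp_mapsTop]
      constructor
      · rintro ⟨hx, rfl⟩
        obtain ⟨v, hbv, hvσ⟩ := mem_sact_dom.mp hx
        have hxU : x ∈ π ⁻¹' a.U := hbv.mem_U
        have htb := (a.mapsTop_top hxU).mapsBot
        refine ⟨_, a.mapsTop_top hxU, _, ⟨?_, rfl⟩, a.mapsTop_top hxU⟩
        show π _ ∈ σ.dom
        rw [← hbv.right_unique htb]
        exact hvσ
      · rintro ⟨y, hxy, y', ⟨hyσ, rfl⟩, hzy⟩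
        exact ⟨mem_sact_dom.mpr ⟨π y, hxy.mapsBot, hyσ⟩, (hzy.left_unique hxy).symm⟩
    · intro u w
      rw [psupp_mapsBot, (hmul _ a).2 u w]
      simp only [(hmul (inv a) (psupp σ)).2, (hinv a).2, psupp_mapsBot]
      constructor
      · rintro ⟨hu, rfl⟩
        obtain ⟨v, hbv, hvσ⟩ := mem_sact_dom.mp hu
        exact ⟨v, hbv, v, ⟨hvσ, rfl⟩, hbv⟩
      · rintro ⟨v, huv, v', ⟨hvσ, rfl⟩, hwv⟩
        exact ⟨mem_sact_dom.mpr ⟨v, huv, hvσ⟩, (hwv.left_unique huv).symm⟩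
  · -- mul (p σ) (p σ) = p σ
    intro σ
    apply PPAuto.ext_graph
    · intro x z
      rw [(hmul _ _).1 x z]
      simp only [psupp_mapsTop]
      constructor
      · rintro ⟨y, ⟨h1, rfl⟩, ⟨h2, rfl⟩⟩; exact ⟨h1, rfl⟩
      · rintro ⟨h, rfl⟩; exact ⟨x, ⟨h, rfl⟩, h, rfl⟩
    · intro u w
      rw [(hmul _ _).2 u w]
      simp only [psupp_mapsBot]
      constructor
      · rintro ⟨v, ⟨h1, rfl⟩, ⟨h2, rfl⟩⟩; exact ⟨h1, rfl⟩
      · rintro ⟨h, rfl⟩; exact ⟨u, ⟨h, rfl⟩, h, rfl⟩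
  · -- idempotent separation
    intro a b ha hb hab
    have key : ∀ {a b : PPAuto π}, mul a a = a →
        (∀ σ : LocalSection π, sact σ a = sact σ b) → a.U ⊆ b.U := by
      intro a b ha hab u hu
      obtain ⟨x, rfl⟩ := hsurj u
      obtain ⟨σ, hσ, -⟩ := exists_localSection hπ x
      have h1 : π x ∈ (sact σ a).dom :=
        mem_sact_dom.mpr ⟨π x, (PPAuto.idem_mapsBot hmul ha).mpr ⟨hu, rfl⟩, hσ⟩
      rw [hab σ] at h1
      obtain ⟨v, hv, -⟩ := mem_sact_dom.mp h1
      exact hv.mem_U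
    have hU : a.U = b.U :=
      Set.Subset.antisymm (key ha hab) (key hb fun σ => (hab σ).symm)
    apply PPAuto.ext_graph
    · intro x y
      rw [PPAuto.idem_mapsTop hmul ha, PPAuto.idem_mapsTop hmul hb, hU]
    · intro u v
      rw [PPAuto.idem_mapsBot hmul ha, PPAuto.idem_mapsBot hmul hb, hU]
  · -- sober case
    intro _ hT0 a b hab
    haveI := hT0
    have spec : ∀ {a b : PPAuto π}, (∀ σ : LocalSection π, sact σ a = sact σ b) →
        ∀ {u v : B}, a.mapsBot u v → ∃ hub : u ∈ b.U,
          ∀ W, IsOpen W → v ∈ W → (b.bot ⟨u, hub⟩).1 ∈ W := by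
      intro a b hab u v huv
      obtain ⟨x, rfl⟩ := hsurj v
      obtain ⟨σ, hσ, -⟩ := exists_localSection hπ x
      have h0 : u ∈ (sact σ b).dom := by
        rw [← hab σ]; exact mem_sact_dom.mpr ⟨π x, huv, hσ⟩
      obtain ⟨v0, hv0, -⟩ := mem_sact_dom.mp h0
      refine ⟨hv0.mem_U, fun W hW hvW => ?_⟩
      have h1 : u ∈ (sact (σ.restr W hW) b).dom := by
        rw [← hab _]
        exact mem_sact_dom.mpr ⟨π x, huv, hσ, hvW⟩
      obtain ⟨v', hv', hm'⟩ := mem_sact_dom.mp h1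
      rw [(b.mapsBot_bot hv0.mem_U).right_unique hv']
      exact hm'.2
    have half : ∀ {a b : PPAuto π}, (∀ σ : LocalSection π, sact σ a = sact σ b) →
        ∀ {u v : B}, a.mapsBot u v → b.mapsBot u v := by
      intro a b hab u v huv
      obtain ⟨hub, hw⟩ := spec hab huv
      have hbw : b.mapsBot u (b.bot ⟨u, hub⟩).1 := b.mapsBot_bot hub
      obtain ⟨hua, hv'⟩ := spec (fun σ => (hab σ).symm) hbw
      have hveq : (a.bot ⟨u, hua⟩).1 = v := (a.mapsBot_bot hua).right_unique huv
      have h1 : (b.bot ⟨u, hub⟩).1 ⤳ v := specializes_iff_forall_open.mpr hw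
      have h2 : v ⤳ (b.bot ⟨u, hub⟩).1 := specializes_iff_forall_open.mpr
        fun W hW hmW => hveq ▸ hv' W hW hmW
      obtain rfl : v = (b.bot ⟨u, hub⟩).1 := (h2.antisymm h1).eq
      exact hbw
    have hbotiff : ∀ u v, a.mapsBot u v ↔ b.mapsBot u v := fun u v =>
      ⟨half hab, half fun σ => (hab σ).symm⟩
    have htopiff : ∀ {a b : PPAuto π}, (∀ σ : LocalSection π, sact σ a = sact σ b) →
        (∀ u v, a.mapsBot u v ↔ b.mapsBot u v) → ∀ x z, a.mapsTop x z → b.mapsTop x z := by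
      intro a b hab hbot x z hxz
      obtain ⟨σ, hσ, hσx⟩ := exists_localSection hπ z
      have hb1 : a.mapsBot (π x) (π z) := hxz.mapsBot
      have hu : π x ∈ (sact σ a).dom := mem_sact_dom.mpr ⟨π z, hb1, hσ⟩
      have hLa := sact_mapsTop' σ a hu hb1 hσ
      rw [hσx] at hLa
      have hx1 : (sact σ a).toFun ⟨π x, hu⟩ = x := hLa.left_unique hxz
      have hu' : π x ∈ (sact σ b).dom := by rw [← hab σ]; exact hu
      have hLb := sact_mapsTop' σ b hu' ((hbot _ _).mp hb1) hσ
      rw [hσx] at hLb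
      have hval : (sact σ b).toFun ⟨π x, hu'⟩ = x :=
        (LocalSection.toFun_congr' (hab σ).symm hu' hu).trans hx1
      rwa [hval] at hLb
    exact PPAuto.ext_graph
      (fun x z => ⟨htopiff hab hbotiff x z,
        htopiff (fun σ => (hab σ).symm) (fun u v => (hbotiff u v).symm) x z⟩)
      hbotiff
end
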